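/- Let a ∈ (0,1), b > 0, m ∈ ℝ, and define G_m(t) = F(1-a,b;2b+1;t) - (1-t)^{1-m} F(1-a,b+1;2b+1;t) for t ∈ (0,1). Then lim_{t→0⁺} G_m(t)/t = (a+2b)/(1+2b) - m. Consequently, if G_m(t) ≥ 0 for all t ∈ (0,1), then m ≤ (a+2b)/(1+2b), and if G_m(t) ≤ 0 for all t ∈ (0,1), then m ≥ (a+2b)/(1+2b). -/

import Mathlib

open Polynomial

/-- Pochhammer symbol `(a)_n` for real `a`. -/
noncomputable def poch (a : ℝ) (n : ℕ) : ℝ := (ascPochhammer ℝ n).eval a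

/-- Gaussian hypergeometric function `F(a,b;c;z)`. -/
noncomputable def hypF (a b c z : ℝ) : ℝ :=
  ∑' n : ℕ, poch a n * poch b n / poch c n * z ^ n / n.factorial

/-!
The three functions `F(1-a, b; 2b+1; t)`, `F(1-a, b+1; 2b+1; t)` and `(1-t)^(1-m)` all equal `1`
at `t = 0`, so `G_m(0) = 0` and `G_m(t)/t` tends to `G_m'(0)`. The hypergeometric coefficients
`(A)_n (B)_n / ((C)_n n!)` lie in `[0, 1]` when `0 < A ≤ 1` and `0 < B ≤ C`, so these series are
analytic near `0` with derivative `A B / C` there, and the product rule gives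
`G_m'(0) = (a + 2b)/(1 + 2b) - m`. The sign conditions on `G_m` pass to the limit of `G_m(t)/t`.
-/

open Filter Topology FormalMultilinearSeries Nat

lemma poch_zero (a : ℝ) : poch a 0 = 1 := by simp [poch]

lemma poch_one (a : ℝ) : poch a 1 = a := by simp [poch]

lemma poch_succ (a : ℝ) (n : ℕ) : poch a (n + 1) = poch a n * (a + n) := by
  simp [poch, ascPochhammer_succ_right]

lemma poch_pos {a : ℝ} (ha : 0 < a) (n : ℕ) : 0 < poch a n := by
  induction n with
  | zero => simp [poch_zero]
  | succ n ih => rw [poch_succ]; positivity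

lemma poch_le_poch {a c : ℝ} (ha : 0 < a) (hac : a ≤ c) (n : ℕ) : poch a n ≤ poch c n := by
  induction n with
  | zero => simp [poch_zero]
  | succ n ih =>
    rw [poch_succ, poch_succ]
    exact mul_le_mul ih (by linarith) (by positivity) ((poch_pos ha n).le.trans ih)

lemma poch_le_factorial {a : ℝ} (h0 : 0 < a) (h1 : a ≤ 1) (n : ℕ) : poch a n ≤ n ! := by
  induction n with
  | zero => simp [poch_zero]
  | succ n ih =>
    rw [poch_succ, Nat.factorial_succ, Nat.cast_mul, mul_comm ((n + 1 : ℕ) : ℝ)]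
    exact mul_le_mul ih (by push_cast; linarith) (by positivity) (by positivity)

lemma hasDerivAt_tsum_mul_pow_zero {k : ℕ → ℝ} {C : ℝ} (hk : ∀ n, |k n| ≤ C) :
    HasDerivAt (fun t => ∑' n, k n * t ^ n) (k 1) 0 := by
  set p := ofScalars ℝ k
  have hradius : (1 : ENNReal) ≤ p.radius :=
    mod_cast p.le_radius_of_bound C fun n => by simpa [p, ofScalars_norm] using hk n
  have hsum : p.sum = fun t => ∑' n, k n * t ^ n := ofScalarsSum_eq_tsum k
  have hp := (p.hasFPowerSeriesOnBall (zero_lt_one.trans_le hradius)).hasFPowerSeriesAt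
  simpa [hsum, p, ofScalars_apply_eq] using hp.hasDerivAt

lemma hypF_eq_tsum (A B C z : ℝ) :
    hypF A B C z = ∑' n, poch A n * poch B n / poch C n / n ! * z ^ n :=
  tsum_congr fun n => by ring

lemma hypF_zero (A B C : ℝ) : hypF A B C 0 = 1 := by
  rw [hypF_eq_tsum, tsum_eq_single 0 fun n hn => by simp [hn]]
  simp [poch_zero]

lemma hypF_coeff_mem_Icc {A B C : ℝ} (hA0 : 0 < A) (hA1 : A ≤ 1) (hB : 0 < B) (hBC : B ≤ C)
    (n : ℕ) : poch A n * poch B n / poch C n / n ! ∈ Set.Icc (0 : ℝ) 1 := by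
  have hC := poch_pos (hB.trans_le hBC) n
  refine ⟨by have := poch_pos hA0 n; have := poch_pos hB n; positivity, ?_⟩
  rw [div_div, div_le_one (by positivity), mul_comm (poch C n)]
  exact mul_le_mul (poch_le_factorial hA0 hA1 n) (poch_le_poch hB hBC n)
    (poch_pos hB n).le (by positivity)

lemma hasDerivAt_hypF_zero {A B C : ℝ} (hA0 : 0 < A) (hA1 : A ≤ 1) (hB : 0 < B) (hBC : B ≤ C) :
    HasDerivAt (hypF A B C) (A * B / C) 0 := by
  have hk n : |poch A n * poch B n / poch C n / n !| ≤ 1 := by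
    obtain ⟨h0, h1⟩ := hypF_coeff_mem_Icc hA0 hA1 hB hBC n
    rwa [abs_of_nonneg h0]
  have h := hasDerivAt_tsum_mul_pow_zero hk
  simp only [poch_one, Nat.factorial_one, Nat.cast_one, div_one] at h
  exact (_root_.funext fun z => hypF_eq_tsum A B C z) ▸ h

lemma hasDerivAt_one_sub_rpow_zero (p : ℝ) : HasDerivAt (fun t : ℝ => (1 - t) ^ p) (-p) 0 := by
  simpa using ((hasDerivAt_id (0 : ℝ)).const_sub 1).rpow_const (p := p) (by norm_num)

lemma tendsto_div_nhdsGT_zero {f : ℝ → ℝ} {f' : ℝ} (hf : HasDerivAt f f' 0) (h0 : f 0 = 0) :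
    Tendsto (fun t => f t / t) (𝓝[>] 0) (𝓝 f') := by
  refine ((hasDerivAt_iff_tendsto_slope.mp hf).mono_left
    (nhdsWithin_mono _ fun t ht => ne_of_gt ht)).congr fun t => ?_
  simp [slope_def_field, h0]

theorem Gm_limit_and_necessary (a b m : ℝ) (ha : a ∈ Set.Ioo (0 : ℝ) 1) (hb : 0 < b)
    (G : ℝ → ℝ)
    (hG : ∀ t, G t = hypF (1 - a) b (2 * b + 1) t
      - (1 - t) ^ (1 - m) * hypF (1 - a) (b + 1) (2 * b + 1) t) :
    Filter.Tendsto (fun t => G t / t) (nhdsWithin 0 (Set.Ioi 0))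
        (nhds ((a + 2 * b) / (1 + 2 * b) - m)) ∧
      ((∀ t ∈ Set.Ioo (0 : ℝ) 1, G t ≥ 0) → m ≤ (a + 2 * b) / (1 + 2 * b)) ∧
      ((∀ t ∈ Set.Ioo (0 : ℝ) 1, G t ≤ 0) → m ≥ (a + 2 * b) / (1 + 2 * b)) := by
  obtain ⟨ha0, ha1⟩ := ha
  have hF₁ := hasDerivAt_hypF_zero (A := 1 - a) (B := b) (C := 2 * b + 1)
    (by linarith) (by linarith) hb (by linarith)
  have hF₂ := hasDerivAt_hypF_zero (A := 1 - a) (B := b + 1) (C := 2 * b + 1)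
    (by linarith) (by linarith) (by linarith) (by linarith)
  have hderiv : HasDerivAt G ((a + 2 * b) / (1 + 2 * b) - m) 0 := by
    rw [show G = _ from _root_.funext hG]
    refine (hF₁.sub ((hasDerivAt_one_sub_rpow_zero (1 - m)).mul hF₂)).congr_deriv ?_
    simp only [sub_zero, Real.one_rpow, hypF_zero]
    field_simp
    ring
  have hlim := tendsto_div_nhdsGT_zero hderiv (by simp [hG, hypF_zero])
  have hIoo : Set.Ioo (0 : ℝ) 1 ∈ 𝓝[>] 0 := Ioo_mem_nhdsGT zero_lt_one
  refine ⟨hlim, fun hpos => ?_, fun hneg => ?_⟩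
  · have := ge_of_tendsto hlim (mem_of_superset hIoo fun t ht => div_nonneg (hpos t ht) ht.1.le)
    linarith
  · have := le_of_tendsto hlim
      (mem_of_superset hIoo fun t ht => div_nonpos_of_nonpos_of_nonneg (hneg t ht) ht.1.le)
    linarith
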